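/- arXiv:2212.10811 — 2 statements merged into one kernel-verified Lean document; each statement's English description precedes it below -/
import Mathlib

section
/- Let ν be a finite compactly supported complex Borel measure on ℂ and let η be a finite positive compactly supported Borel measure on ℂ with c-linear growth such that η is mutually singular with |ν|. Then η(ND(ν)) = 0. -/
open Filter MeasureTheory Metric Set Topology Complex
open scoped ENNReal NNReal

noncomputable section

/-- Analytic capacity of a compact set `B`: the supremum of `|f'(∞)|` over functions
analytic on the complement of `B` (including at `∞`) and bounded by `1` there. -/
def anCapCpt (B : Set ℂ) : ℝ :=
  sSup {r : ℝ | ∃ (f : ℂ → ℂ) (a d : ℂ),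
    DifferentiableOn ℂ f Bᶜ ∧ (∀ z ∈ Bᶜ, ‖f z‖ ≤ 1) ∧
    Tendsto f (cocompact ℂ) (𝓝 a) ∧
    Tendsto (fun z => z * (f z - a)) (cocompact ℂ) (𝓝 d) ∧ r = ‖d‖}

/-- Analytic capacity of an arbitrary set. -/
def anCap (E : Set ℂ) : ℝ :=
  sSup {r : ℝ | ∃ B, B ⊆ E ∧ IsCompact B ∧ r = anCapCpt B}

/-- The `ε`-truncated Cauchy transform of the complex measure `g·μ`. -/
def truncCT (μ : Measure ℂ) (g : ℂ → ℂ) (ε : ℝ) (z : ℂ) : ℂ :=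
  ∫ w in {w : ℂ | ε < ‖w - z‖}, (w - z)⁻¹ * g w ∂μ

/-- The principal value Cauchy transform of `g·μ` exists at `z`. -/
def CTExistsAt (μ : Measure ℂ) (g : ℂ → ℂ) (z : ℂ) : Prop :=
  ∃ c : ℂ, Tendsto (fun ε => truncCT μ g ε z) (𝓝[>] (0 : ℝ)) (𝓝 c)

/-- The principal value Cauchy transform of `g·μ` at `z`. -/
def cauchyPV (μ : Measure ℂ) (g : ℂ → ℂ) (z : ℂ) : ℂ :=
  limUnder (𝓝[>] (0 : ℝ)) (fun ε => truncCT μ g ε z)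

/-- The constant function `1`, used for the Cauchy transform of a positive measure. -/
def oneF : ℂ → ℂ := fun _ => 1

/-- Upper linear density `Θ*` of a (positive) measure at a point. -/
def upperDensity (μ : Measure ℂ) (z : ℂ) : ℝ≥0∞ :=
  limsup (fun δ : ℝ => μ (ball z δ) / ENNReal.ofReal δ) (𝓝[>] (0 : ℝ))

/-- The zero linear density set `ZD(μ)`. -/
def ZD (μ : Measure ℂ) : Set ℂ :=
  {z | Tendsto (fun δ : ℝ => μ (ball z δ) / ENNReal.ofReal δ) (𝓝[>] (0 : ℝ)) (𝓝 0)}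

/-- The non-zero linear density set `ND(μ)`. -/
def ND (μ : Measure ℂ) : Set ℂ := {z | 0 < upperDensity μ z}

/-- `ND(μ, n) = {z : 1/n ≤ Θ*_μ(z) ≤ n}`. -/
def NDn (μ : Measure ℂ) (n : ℕ) : Set ℂ :=
  {z | ((n : ℝ≥0∞))⁻¹ ≤ upperDensity μ z ∧ upperDensity μ z ≤ (n : ℝ≥0∞)}

/-- `η` has `c`-linear growth. -/
def LinGrowth (η : Measure ℂ) (c : ℝ) : Prop :=
  ∀ z : ℂ, ∀ δ : ℝ, 0 < δ → η (ball z δ) ≤ ENNReal.ofReal (c * δ)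

/-- The graph of `A : ℝ → ℝ` inside `ℂ`. -/
def graphC (A : ℝ → ℝ) : Set ℂ := Set.range (fun x : ℝ => (x : ℂ) + A x * Complex.I)

/-- The function `L(z) = (1 + iA'(Re z)) / (2πi (1 + A'(Re z)²)^{1/2})`. -/
def Lgraph (A : ℝ → ℝ) (z : ℂ) : ℂ :=
  (1 + Complex.ofReal (deriv A z.re) * Complex.I) /
    (2 * Complex.ofReal Real.pi * Complex.I *
      Complex.ofReal (Real.sqrt (1 + (deriv A z.re) ^ 2)))

/-- The open region above the graph of `A`. -/
def Ugraph (A : ℝ → ℝ) : Set ℂ := {z | A z.re < z.im}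

/-- The open region below the graph of `A`. -/
def Lregion (A : ℝ → ℝ) : Set ℂ := {z | z.im < A z.re}

/-- A rotated Lipschitz graph: Lipschitz function, rotation angle and rotation center. -/
structure RotLipGraph where
  A : ℝ → ℝ
  M : ℝ≥0
  lip : LipschitzWith M A
  β : ℝ
  z₀ : ℂ

/-- The subset of `ℂ` determined by a rotated Lipschitz graph. -/
def RotLipGraph.carrier (Γ : RotLipGraph) : Set ℂ :=
  (fun z => Γ.z₀ + Complex.exp ((Γ.β : ℂ) * Complex.I) * (z - Γ.z₀)) '' graphC Γ.A

/-- Upper Plemelj boundary value `v⁺(ν, Γ, β)` of the Cauchy transform of `ν = g·μ` on the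
rotated graph `Γ`, where `hd` is the density of `ν` with respect to `H¹` on `Γ`. -/
def vP (μ : Measure ℂ) (g : ℂ → ℂ) (hd : ℂ → ℂ) (Γ : RotLipGraph) (lam : ℂ) : ℂ :=
  cauchyPV μ g lam +
    Complex.exp (-(Γ.β : ℂ) * Complex.I) * hd lam /
      (2 * Lgraph Γ.A ((lam - Γ.z₀) * Complex.exp (-(Γ.β : ℂ) * Complex.I) + Γ.z₀))

/-- Lower Plemelj boundary value `v⁻(ν, Γ, β)`. -/
def vM (μ : Measure ℂ) (g : ℂ → ℂ) (hd : ℂ → ℂ) (Γ : RotLipGraph) (lam : ℂ) : ℂ :=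
  cauchyPV μ g lam -
    Complex.exp (-(Γ.β : ℂ) * Complex.I) * hd lam /
      (2 * Lgraph Γ.A ((lam - Γ.z₀) * Complex.exp (-(Γ.β : ℂ) * Complex.I) + Γ.z₀))

/-- The decomposition `μ = h·H¹|_Γ + μ_s`, `Γ = ⋃ Γ_n`, `μ_s ⊥ H¹|_Γ`. -/
def GraphDecomp (μ : Measure ℂ) (Γ : ℕ → RotLipGraph) (h : ℂ → ℝ) (μs : Measure ℂ) : Prop :=
  (∀ z, 0 ≤ h z) ∧
  Integrable h ((μH[1] : Measure ℂ).restrict (⋃ n, (Γ n).carrier)) ∧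
  μ = ((μH[1] : Measure ℂ).restrict (⋃ n, (Γ n).carrier)).withDensity
        (fun z => ENNReal.ofReal (h z)) + μs ∧
  μs ⟂ₘ (μH[1] : Measure ℂ).restrict (⋃ n, (Γ n).carrier)

/-- A decomposition as produced by the structure theorem (Lemma `GammaExist`):
the decomposition `μ = h·H¹|_Γ + μ_s` together with `ND(μ) ≈ {h ≠ 0}` up to analytic
capacity zero and `Θ_{μ_s} = 0` off a set of analytic capacity zero. -/
def GoodDecomp (μ : Measure ℂ) (Γ : ℕ → RotLipGraph) (h : ℂ → ℝ) (μs : Measure ℂ) : Prop :=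
  GraphDecomp μ Γ h μs ∧
  anCap ((ND μ \ {z | h z ≠ 0}) ∪ ({z | h z ≠ 0} \ ND μ)) = 0 ∧
  ∃ Q : Set ℂ, anCap Q = 0 ∧ ∀ z ∉ Q,
    Tendsto (fun δ : ℝ => μs (ball z δ) / ENNReal.ofReal δ) (𝓝[>] (0 : ℝ)) (𝓝 0)

/-- `𝓕₀(Λ)`, the non-removable boundary of zero density. -/
def F0 (μ : Measure ℂ) (g : ℕ → ℂ → ℂ) : Set ℂ :=
  {z | z ∈ ZD μ ∧ ∀ j, cauchyPV μ (g j) z = 0}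

/-- `𝓡₀(Λ)`, the removable set of zero density. -/
def R0 (μ : Measure ℂ) (g : ℕ → ℂ → ℂ) : Set ℂ :=
  {z | z ∈ ZD μ ∧ ∃ j, cauchyPV μ (g j) z ≠ 0}

/-- `𝓕₊(Λ)`, the upper non-removable boundary. -/
def Fp (μ : Measure ℂ) (g : ℕ → ℂ → ℂ) (Γ : ℕ → RotLipGraph) (h : ℂ → ℝ) : Set ℂ :=
  (⋃ n, {z | z ∈ (Γ n).carrier ∧
    ∀ j, vP μ (g j) (fun w => g j w * (h w : ℂ)) (Γ n) z = 0}) ∩ ND μ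

/-- `𝓕₋(Λ)`, the lower non-removable boundary. -/
def Fm (μ : Measure ℂ) (g : ℕ → ℂ → ℂ) (Γ : ℕ → RotLipGraph) (h : ℂ → ℝ) : Set ℂ :=
  (⋃ n, {z | z ∈ (Γ n).carrier ∧
    ∀ j, vM μ (g j) (fun w => g j w * (h w : ℂ)) (Γ n) z = 0}) ∩ ND μ

/-- `𝓡₁(Λ)`, the removable set for the non-zero density part. -/
def R1 (μ : Measure ℂ) (g : ℕ → ℂ → ℂ) (Γ : ℕ → RotLipGraph) (h : ℂ → ℝ) : Set ℂ :=
  (⋃ n, {z | z ∈ (Γ n).carrier ∧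
    (∃ j, vP μ (g j) (fun w => g j w * (h w : ℂ)) (Γ n) z ≠ 0) ∧
    (∃ j, vM μ (g j) (fun w => g j w * (h w : ℂ)) (Γ n) z ≠ 0)}) ∩ ND μ

/-- The non-removable boundary `𝓕(Λ)`. -/
def Fset (μ : Measure ℂ) (g : ℕ → ℂ → ℂ) (Γ : ℕ → RotLipGraph) (h : ℂ → ℝ) : Set ℂ :=
  F0 μ g ∪ Fp μ g Γ h ∪ Fm μ g Γ h

/-- The removable set `𝓡(Λ)`. -/
def Rset (μ : Measure ℂ) (g : ℕ → ℂ → ℂ) (Γ : ℕ → RotLipGraph) (h : ℂ → ℝ) : Set ℂ :=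
  R0 μ g ∪ R1 μ g Γ h

/-- The set `𝓔_N(Λ)`. -/
def Eset (μ : Measure ℂ) (g : ℕ → ℂ → ℂ) (N : ℕ) : Set ℂ :=
  {z | ∀ j < N, CTExistsAt μ (g j) z ∧ ‖cauchyPV μ (g j) z‖ ≤ 1 / (N : ℝ)}

/-- `Rat(K)`: rational functions with poles off `K`. -/
def RatK (K : Set ℂ) : Set (ℂ → ℂ) :=
  {f | ∃ p q : Polynomial ℂ, (∀ z ∈ K, q.eval z ≠ 0) ∧ ∀ z, f z = p.eval z / q.eval z}

/-- Membership in `R^t(K, μ)`, the `L^t(μ)`-closure of `Rat(K)`. -/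
def MemRt (K : Set ℂ) (μ : Measure ℂ) (t : ℝ≥0∞) (f : ℂ → ℂ) : Prop :=
  MemLp f t μ ∧ ∀ ε : ℝ, 0 < ε → ∃ r ∈ RatK K, eLpNorm (f - r) t μ < ENNReal.ofReal ε

/-- Membership in `R^{t,∞}(K, μ) = R^t(K, μ) ∩ L^∞(μ)`. -/
def MemRtInf (K : Set ℂ) (μ : Measure ℂ) (t : ℝ≥0∞) (f : ℂ → ℂ) : Prop :=
  MemRt K μ t f ∧ MemLp f ⊤ μ

/-- Membership in the annihilator `R^t(K, μ)^⊥ ⊆ L^s(μ)`. -/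
def MemPerp (K : Set ℂ) (μ : Measure ℂ) (s : ℝ≥0∞) (g : ℂ → ℂ) : Prop :=
  MemLp g s μ ∧ ∀ r ∈ RatK K, ∫ z, r z * g z ∂μ = 0

/-- `Λ = {g_j}` is an `L^s(μ)`-norm dense subset of `R^t(K, μ)^⊥`. -/
def DenseInPerp (K : Set ℂ) (μ : Measure ℂ) (s : ℝ≥0∞) (g : ℕ → ℂ → ℂ) : Prop :=
  (∀ j, MemPerp K μ s (g j)) ∧
  ∀ f : ℂ → ℂ, MemPerp K μ s f → ∀ ε : ℝ, 0 < ε →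
    ∃ j, eLpNorm (f - g j) s μ < ENNReal.ofReal ε

/-- Bounded point evaluations for `R^t(K, μ)`. -/
def bpe (K : Set ℂ) (μ : Measure ℂ) (t : ℝ≥0∞) : Set ℂ :=
  {z | ∃ M : ℝ, 0 < M ∧ ∀ r ∈ RatK K, ‖r z‖ ≤ M * (eLpNorm r t μ).toReal}

/-- Analytic bounded point evaluations for `R^t(K, μ)`. -/
def abpe (K : Set ℂ) (μ : Measure ℂ) (t : ℝ≥0∞) : Set ℂ :=
  {z | z ∈ interior (bpe K μ t) ∧
    ∃ δ : ℝ, 0 < δ ∧ ∃ M : ℝ, 0 < M ∧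
      ∀ w ∈ ball z δ, ∀ r ∈ RatK K, ‖r w‖ ≤ M * (eLpNorm r t μ).toReal}

/-- The (closed) support of a measure on `ℂ`. -/
def sptM (μ : Measure ℂ) : Set ℂ := {z | ∀ δ : ℝ, 0 < δ → 0 < μ (ball z δ)}

/-- The spectrum of the multiplication operator `S_μ` (multiplication by `z`) on `R^t(K, μ)`:
points where multiplication by `z - λ` fails to be a bijection of `R^t(K, μ)`. -/
def specSmul (K : Set ℂ) (μ : Measure ℂ) (t : ℝ≥0∞) : Set ℂ :=
  {lam | ¬ ((∀ f : ℂ → ℂ, MemRt K μ t f → (∀ᵐ z ∂μ, (z - lam) * f z = 0) →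
              f =ᵐ[μ] (fun _ => (0 : ℂ))) ∧
            (∀ g : ℂ → ℂ, MemRt K μ t g →
              ∃ f : ℂ → ℂ, MemRt K μ t f ∧ ∀ᵐ z ∂μ, (z - lam) * f z = g z))}

/-- Purity of `S_μ` on `R^t(K, μ)`: no non-trivial direct `L^t` summand. -/
def PureRt (K : Set ℂ) (μ : Measure ℂ) (t : ℝ≥0∞) : Prop :=
  ∀ Δ : Set ℂ, MeasurableSet Δ →
    (∀ f : ℂ → ℂ, MemLp f t μ → MemRt K μ t (Δ.indicator f)) → μ Δ = 0

/-- The boundary piece `∂₁K`. -/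
def bdry1 (K : Set ℂ) : Set ℂ :=
  {lam | lam ∈ K ∧
    0 < limsup (fun δ : ℝ => anCap (ball lam δ \ K) / δ) (𝓝[>] (0 : ℝ))}

/-- The evaluation map `ρ : f ↦ f|_U` is an isometric isomorphism and a weak-star
homeomorphism from `R^{t,∞}(K, ν)` onto `H^∞(U)`. -/
def IsEvalIso (K : Set ℂ) (ν : Measure ℂ) (t : ℝ≥0∞) (U : Set ℂ) : Prop :=
  ∃ ρ : (ℂ → ℂ) → (ℂ → ℂ),
    (∀ f, MemRtInf K ν t f → DifferentiableOn ℂ (ρ f) U) ∧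
    (∀ f, MemRtInf K ν t f → ∀ᵐ z ∂(ν.restrict U), ρ f z = f z) ∧
    (∀ f g, MemRtInf K ν t f → MemRtInf K ν t g →
      ∀ z ∈ U, ρ (f + g) z = ρ f z + ρ g z) ∧
    (∀ f g, MemRtInf K ν t f → MemRtInf K ν t g →
      ∀ z ∈ U, ρ (f * g) z = ρ f z * ρ g z) ∧
    -- isometric: `sup_{z ∈ U} ‖ρ f z‖ = ‖f‖_{L^∞(ν)}`
    (∀ f, MemRtInf K ν t f →
      (∀ z ∈ U, ‖ρ f z‖ ≤ (eLpNorm f ⊤ ν).toReal) ∧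
      (∀ c : ℝ, (∀ z ∈ U, ‖ρ f z‖ ≤ c) → (eLpNorm f ⊤ ν).toReal ≤ c)) ∧
    -- injective
    (∀ f g, MemRtInf K ν t f → MemRtInf K ν t g →
      (∀ z ∈ U, ρ f z = ρ g z) → f =ᵐ[ν] g) ∧
    -- surjective onto `H^∞(U)`
    (∀ F : ℂ → ℂ, DifferentiableOn ℂ F U → (∃ M : ℝ, ∀ z ∈ U, ‖F z‖ ≤ M) →
      ∃ f, MemRtInf K ν t f ∧ ∀ z ∈ U, ρ f z = F z) ∧
    -- weak-star homeomorphism (sequentially, on norm-bounded sequences)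
    (∀ (fk : ℕ → ℂ → ℂ) (f : ℂ → ℂ), (∀ k, MemRtInf K ν t (fk k)) → MemRtInf K ν t f →
      (∃ M : ℝ≥0∞, ∀ k, eLpNorm (fk k) ⊤ ν ≤ M) →
      ((∀ φ : ℂ → ℂ, Integrable φ ν →
          Tendsto (fun k => ∫ z, fk k z * φ z ∂ν) atTop (𝓝 (∫ z, f z * φ z ∂ν))) ↔
       (∀ φ : ℂ → ℂ, Integrable φ ((volume : Measure ℂ).restrict U) →
          Tendsto (fun k => ∫ z, ρ (fk k) z * φ z ∂((volume : Measure ℂ).restrict U)) atTop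
            (𝓝 (∫ z, ρ f z * φ z ∂((volume : Measure ℂ).restrict U))))))

end

namespace LinGrowth

variable {η : Measure ℂ} {c : ℝ}

theorem mono (hc : LinGrowth η c) {c' : ℝ} (hcc' : c ≤ c') : LinGrowth η c' :=
  fun z δ hδ => (hc z δ hδ).trans (ENNReal.ofReal_le_ofReal (by gcongr))

theorem measure_closedBall_le (hc : LinGrowth η c) (z : ℂ) {δ : ℝ} (hδ : 0 < δ) :
    η (closedBall z δ) ≤ ENNReal.ofReal (2 * c) * ENNReal.ofReal δ :=
  calc η (closedBall z δ)
      ≤ η (ball z (2 * δ)) := measure_mono (closedBall_subset_ball (by linarith))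
    _ ≤ ENNReal.ofReal (c * (2 * δ)) := hc z (2 * δ) (by linarith)
    _ = ENNReal.ofReal (2 * c) * ENNReal.ofReal δ := by
      rw [← ENNReal.ofReal_mul' hδ.le]; ring_nf

end LinGrowth

theorem tendsto_measure_ball_div_radius_of_tendsto_div {α : Type*} [PseudoMetricSpace α]
    [MeasurableSpace α] {ρ η : Measure α} {z : α} {C : ℝ≥0∞} (hC₀ : C ≠ 0) (hC : C ≠ ∞)
    (hgrowth : ∀ δ : ℝ, 0 < δ → η (closedBall z δ) ≤ C * ENNReal.ofReal δ)
    (hratio : Tendsto (fun δ => ρ (closedBall z δ) / η (closedBall z δ)) (𝓝[>] 0) (𝓝 0)) :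
    Tendsto (fun δ : ℝ => ρ (ball z δ) / ENNReal.ofReal δ) (𝓝[>] 0) (𝓝 0) := by
  have hbound : ∀ᶠ δ in 𝓝[>] (0 : ℝ), ρ (ball z δ) / ENNReal.ofReal δ ≤
      C * (ρ (closedBall z δ) / η (closedBall z δ)) := by
    filter_upwards [self_mem_nhdsWithin] with δ (hδ : 0 < δ)
    calc ρ (ball z δ) / ENNReal.ofReal δ
        = C * (ρ (ball z δ) / (C * ENNReal.ofReal δ)) := by
          rw [← mul_div_assoc, ENNReal.mul_div_mul_left _ _ hC₀ hC]
      _ ≤ C * (ρ (closedBall z δ) / η (closedBall z δ)) := by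
          gcongr
          · exact ball_subset_closedBall
          · exact hgrowth δ hδ
  have hlim : Tendsto (fun δ => C * (ρ (closedBall z δ) / η (closedBall z δ)))
      (𝓝[>] 0) (𝓝 0) := by
    simpa using ENNReal.Tendsto.const_mul hratio (Or.inr hC)
  exact tendsto_of_tendsto_of_tendsto_of_le_of_le' tendsto_const_nhds hlim
    (Eventually.of_forall fun _ => zero_le) hbound

theorem ND_subset_compl_ZD (μ : Measure ℂ) : ND μ ⊆ (ZD μ)ᶜ :=
  fun _ hND hZD => hND.ne' hZD.limsup_eq

/-- By Besicovitch differentiation `ρ(B̄(z,δ)) / η(B̄(z,δ)) → dρ/dη (z)`, which vanishes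
`η`-a.e. by singularity; linear growth lets `δ` replace the denominator. -/
theorem LinGrowth.ae_mem_ZD_of_mutuallySingular {η ρ : Measure ℂ} [IsLocallyFiniteMeasure η]
    [IsLocallyFiniteMeasure ρ] {c : ℝ} (hc : LinGrowth η c) (hsing : η ⟂ₘ ρ) :
    ∀ᵐ z ∂η, z ∈ ZD ρ := by
  have hC₀ : ENNReal.ofReal (2 * max c 1) ≠ 0 := by
    rw [ne_eq, ENNReal.ofReal_eq_zero, not_le]; positivity
  filter_upwards [Besicovitch.ae_tendsto_rnDeriv ρ η, hsing.symm.rnDeriv_ae_eq_zero]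
    with z hz hzero
  rw [hzero, Pi.zero_apply] at hz
  exact tendsto_measure_ball_div_radius_of_tendsto_div hC₀ ENNReal.ofReal_ne_top
    (fun δ hδ => (hc.mono (le_max_left c 1)).measure_closedBall_le z hδ) hz

theorem stmt3_general (μν : Measure ℂ) (gν : ℂ → ℂ)
    (hgν : Integrable gν μν)
    (η : Measure ℂ) [IsFiniteMeasure η]
    (c : ℝ) (hc : LinGrowth η c)
    (hsing : η ⟂ₘ μν.withDensity (fun w => (‖gν w‖₊ : ℝ≥0∞))) :
    η (ND (μν.withDensity (fun w => (‖gν w‖₊ : ℝ≥0∞)))) = 0 := by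
  have : IsFiniteMeasure (μν.withDensity (fun w => (‖gν w‖₊ : ℝ≥0∞))) :=
    isFiniteMeasure_withDensity hgν.2.ne
  exact measure_mono_null (ND_subset_compl_ZD _) (hc.ae_mem_ZD_of_mutuallySingular hsing)

/-- A positive measure with linear growth that is mutually singular with `|ν|`
gives zero mass to the non-zero linear density set of `ν`.  The complex measure `ν` is
`gν·μν` and `|ν|` is the measure with density `‖gν‖` with respect to `μν`. -/
theorem stmt3 (μν : Measure ℂ) [IsFiniteMeasure μν] (gν : ℂ → ℂ)
    (hgν : Integrable gν μν) (hνcpt : ∃ B : Set ℂ, IsCompact B ∧ μν Bᶜ = 0)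
    (η : Measure ℂ) [IsFiniteMeasure η] (hηcpt : ∃ B : Set ℂ, IsCompact B ∧ η Bᶜ = 0)
    (c : ℝ) (hc : LinGrowth η c)
    (hsing : η ⟂ₘ μν.withDensity (fun w => (‖gν w‖₊ : ℝ≥0∞))) :
    η (ND (μν.withDensity (fun w => (‖gν w‖₊ : ℝ≥0∞)))) = 0 :=
  stmt3_general μν gν hgν η c hc hsing
end

section
/- For every g ∈ R^t(K,μ)^⊥, the principal value Cauchy transform C(gμ)(z) vanishes for almost every z in the non-removable boundary 𝓕 with respect to planar Lebesgue (area) measure. -/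
open Filter MeasureTheory Metric Set Topology Complex
open scoped ENNReal NNReal

/-! For a finite measure `ν`, Tonelli and the local integrability of `1/|u|` in the plane give
`∫ |w - z|⁻¹ d|ν|(w) < ∞` for area-a.e. `z`; at such `z` the principal value `C(ν)(z)` is an
absolutely convergent integral, and `|C(ν)(z) - C(ν')(z)| ≤ ∫ |w - z|⁻¹ d|ν - ν'|(w)`.
Choosing `j_k` with `∑ₖ ‖gp - g_{j_k}‖_{L¹(μ)} < ∞` (Hölder, `s ≥ 1`), the same argument applied
to the sum makes these bounds tend to `0` area-a.e., so `C(gp μ) = 0` a.e. on `𝓕₀`, where all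
`C(g_j μ)` vanish. The rest of `𝓕` lies on countably many Lipschitz graphs, of zero area. -/

section CauchyIntegral

variable {μ : Measure ℂ}

noncomputable def cauchyMajorant (μ : Measure ℂ) (F : ℂ → ℝ≥0∞) (z : ℂ) : ℝ≥0∞ :=
  ∫⁻ w, ‖(w - z)⁻¹‖ₑ * F w ∂μ

lemma cauchyMajorant_congr_ae {F G : ℂ → ℝ≥0∞} (h : F =ᵐ[μ] G) :
    cauchyMajorant μ F = cauchyMajorant μ G :=
  funext fun _ => lintegral_congr_ae (h.mono fun _ hw => congrArg _ hw)

lemma measurable_cauchyMajorant [SFinite μ] {F : ℂ → ℝ≥0∞} (hF : Measurable F) :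
    Measurable (cauchyMajorant μ F) :=
  Measurable.lintegral_prod_right'
    (((measurable_snd.sub measurable_fst).inv.enorm).mul (hF.comp measurable_snd))

lemma enorm_inv_le_indicator_add_one (u : ℂ) :
    ‖u⁻¹‖ₑ ≤ (ball (0 : ℂ) 1).indicator (fun v => ‖v⁻¹‖ₑ) u + 1 := by
  by_cases hu : u ∈ ball (0 : ℂ) 1
  · rw [indicator_of_mem hu]
    exact le_self_add
  · rw [mem_ball_zero_iff, not_lt] at hu
    have hu0 : u ≠ 0 := norm_pos_iff.1 (by linarith)
    rw [indicator_of_notMem (by simpa using hu), zero_add, enorm_inv hu0, ENNReal.inv_le_one,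
      ← ofReal_norm]
    exact ENNReal.one_le_ofReal.2 hu

lemma lintegral_ball_enorm_inv_lt_top : ∫⁻ u in ball (0 : ℂ) 1, ‖u⁻¹‖ₑ < ⊤ := by
  have hint : IntegrableOn (fun u : ℂ => u⁻¹) (ball 0 1) :=
    integrableOn_ball_of_norm_le_rpow (by simp) (C := 1) (α := 1) (by simp)
      (Eventually.of_forall fun u => by simp [Real.rpow_neg_one])
      measurable_inv.aestronglyMeasurable
  exact hint.hasFiniteIntegral

lemma setLIntegral_enorm_inv_sub_le (S : Set ℂ) (w : ℂ) :
    ∫⁻ z in S, ‖(w - z)⁻¹‖ₑ ≤ (∫⁻ u in ball (0 : ℂ) 1, ‖u⁻¹‖ₑ) + volume S := by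
  set G : ℂ → ℝ≥0∞ := (ball (0 : ℂ) 1).indicator fun v => ‖v⁻¹‖ₑ
  have hG : Measurable G := measurable_inv.enorm.indicator measurableSet_ball
  calc ∫⁻ z in S, ‖(w - z)⁻¹‖ₑ ≤ ∫⁻ z in S, (G (w - z) + 1) :=
        lintegral_mono fun z => enorm_inv_le_indicator_add_one _
    _ = (∫⁻ z in S, G (w - z)) + volume S := by
        rw [lintegral_add_right _ measurable_const, setLIntegral_const, one_mul]
    _ ≤ (∫⁻ z, G (w - z)) + volume S := add_le_add_left (setLIntegral_le_lintegral _ _) _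
    _ = (∫⁻ u in ball (0 : ℂ) 1, ‖u⁻¹‖ₑ) + volume S := by
        rw [lintegral_sub_left_eq_self, lintegral_indicator measurableSet_ball]

lemma setLIntegral_cauchyMajorant_le [SFinite μ] {F : ℂ → ℝ≥0∞} (hF : Measurable F)
    (S : Set ℂ) :
    ∫⁻ z in S, cauchyMajorant μ F z ≤
      ((∫⁻ u in ball (0 : ℂ) 1, ‖u⁻¹‖ₑ) + volume S) * ∫⁻ w, F w ∂μ := by
  calc ∫⁻ z in S, cauchyMajorant μ F z = ∫⁻ w, (∫⁻ z in S, ‖(w - z)⁻¹‖ₑ) * F w ∂μ := by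
        unfold cauchyMajorant
        rw [lintegral_lintegral_swap (((measurable_snd.sub measurable_fst).inv.enorm).mul
          (hF.comp measurable_snd)).aemeasurable]
        exact lintegral_congr fun w =>
          lintegral_mul_const _ (measurable_const.sub measurable_id).inv.enorm
    _ ≤ ∫⁻ w, ((∫⁻ u in ball (0 : ℂ) 1, ‖u⁻¹‖ₑ) + volume S) * F w ∂μ :=
        lintegral_mono fun w => mul_le_mul_left (setLIntegral_enorm_inv_sub_le S w) _
    _ = ((∫⁻ u in ball (0 : ℂ) 1, ‖u⁻¹‖ₑ) + volume S) * ∫⁻ w, F w ∂μ :=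
        lintegral_const_mul _ hF

lemma ae_cauchyMajorant_lt_top [SFinite μ] {F : ℂ → ℝ≥0∞} (hF : AEMeasurable F μ)
    (hint : ∫⁻ w, F w ∂μ ≠ ⊤) : ∀ᵐ z, cauchyMajorant μ F z < ⊤ := by
  rw [cauchyMajorant_congr_ae hF.ae_eq_mk]
  refine ae_of_forall_measure_lt_top_ae_restrict _ fun S _ hS =>
    ae_lt_top (measurable_cauchyMajorant hF.measurable_mk) (ne_top_of_le_ne_top ?_
      (setLIntegral_cauchyMajorant_le hF.measurable_mk S))
  rw [← lintegral_congr_ae hF.ae_eq_mk]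
  exact ENNReal.mul_ne_top (ENNReal.add_ne_top.2 ⟨lintegral_ball_enorm_inv_lt_top.ne, hS.ne⟩) hint

noncomputable def cauchyIntegral (μ : Measure ℂ) (f : ℂ → ℂ) (z : ℂ) : ℂ :=
  ∫ w, (w - z)⁻¹ * f w ∂μ

variable {f g : ℂ → ℂ} {z : ℂ}

lemma integrable_cauchyKernel_mul (hf : AEStronglyMeasurable f μ)
    (hz : cauchyMajorant μ (‖f ·‖ₑ) z ≠ ⊤) : Integrable (fun w => (w - z)⁻¹ * f w) μ :=
  ⟨(measurable_id.sub_const z).inv.aestronglyMeasurable.mul hf, by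
    simpa only [HasFiniteIntegral, enorm_mul, cauchyMajorant] using hz.lt_top⟩

lemma enorm_cauchyIntegral_le (μ : Measure ℂ) (f : ℂ → ℂ) (z : ℂ) :
    ‖cauchyIntegral μ f z‖ₑ ≤ cauchyMajorant μ (‖f ·‖ₑ) z := by
  simpa only [enorm_mul, cauchyIntegral, cauchyMajorant] using
    enorm_integral_le_lintegral_enorm (μ := μ) fun w => (w - z)⁻¹ * f w

lemma edist_cauchyIntegral_le (hf : AEStronglyMeasurable f μ) (hg : AEStronglyMeasurable g μ)
    (hfz : cauchyMajorant μ (‖f ·‖ₑ) z ≠ ⊤) (hgz : cauchyMajorant μ (‖g ·‖ₑ) z ≠ ⊤) :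
    edist (cauchyIntegral μ f z) (cauchyIntegral μ g z) ≤
      cauchyMajorant μ (fun w => ‖f w - g w‖ₑ) z := by
  have hsub : cauchyIntegral μ f z - cauchyIntegral μ g z = cauchyIntegral μ (f - g) z := by
    simp only [cauchyIntegral, Pi.sub_apply, mul_sub]
    exact (integral_sub (integrable_cauchyKernel_mul hf hfz)
      (integrable_cauchyKernel_mul hg hgz)).symm
  rw [edist_eq_enorm_sub, hsub]
  exact enorm_cauchyIntegral_le μ (f - g) z

lemma tendsto_truncCT_cauchyIntegral (hf : AEStronglyMeasurable f μ)
    (hz : cauchyMajorant μ (‖f ·‖ₑ) z ≠ ⊤) :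
    Tendsto (fun ε => truncCT μ f ε z) (𝓝[>] 0) (𝓝 (cauchyIntegral μ f z)) := by
  have hint := integrable_cauchyKernel_mul hf hz
  have hmeas (ε : ℝ) : MeasurableSet {w : ℂ | ε < ‖w - z‖} :=
    measurableSet_lt measurable_const (measurable_id.sub_const z).norm
  simp_rw [truncCT, ← integral_indicator (hmeas _)]
  refine tendsto_integral_filter_of_dominated_convergence (fun w => ‖(w - z)⁻¹ * f w‖)
    (Eventually.of_forall fun ε => hint.1.indicator (hmeas ε))
    (Eventually.of_forall fun ε => Eventually.of_forall fun w => norm_indicator_le_norm_self _ _)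
    hint.norm (Eventually.of_forall fun w => ?_)
  rcases eq_or_ne w z with rfl | hw
  · have h0 (ε : ℝ) : {w' : ℂ | ε < ‖w' - w‖}.indicator (fun w' => (w' - w)⁻¹ * f w') w = 0 :=
      indicator_apply_eq_zero.2 fun _ => by simp
    simp [h0]
  · refine tendsto_const_nhds.congr' ?_
    have hwz : (0 : ℝ) < ‖w - z‖ := norm_pos_iff.2 (sub_ne_zero.2 hw)
    filter_upwards [Ioo_mem_nhdsGT hwz] with ε hε
    exact (indicator_of_mem (show w ∈ {w : ℂ | ε < ‖w - z‖} from hε.2)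
      fun w => (w - z)⁻¹ * f w).symm

lemma cauchyPV_eq_cauchyIntegral (hf : AEStronglyMeasurable f μ)
    (hz : cauchyMajorant μ (‖f ·‖ₑ) z ≠ ⊤) : cauchyPV μ f z = cauchyIntegral μ f z :=
  (tendsto_truncCT_cauchyIntegral hf hz).limUnder_eq

lemma stronglyMeasurable_cauchyIntegral [SFinite μ] (hf : AEStronglyMeasurable f μ) :
    StronglyMeasurable (cauchyIntegral μ f) := by
  have : cauchyIntegral μ f = cauchyIntegral μ (hf.mk f) :=
    funext fun z => integral_congr_ae (hf.ae_eq_mk.mono fun _ hw => congrArg _ hw)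
  rw [this]
  exact StronglyMeasurable.integral_prod_right' ((measurable_snd.sub measurable_fst).inv.mul
    (hf.stronglyMeasurable_mk.measurable.comp measurable_snd)).stronglyMeasurable

lemma ae_cauchyPV_eq_cauchyIntegral [SFinite μ] (hf : Integrable f μ) :
    cauchyPV μ f =ᵐ[volume] cauchyIntegral μ f := by
  filter_upwards [ae_cauchyMajorant_lt_top hf.1.enorm hf.2.ne] with z hz
  exact cauchyPV_eq_cauchyIntegral hf.1 hz.ne

lemma tsum_cauchyMajorant {F : ℕ → ℂ → ℝ≥0∞} (hF : ∀ k, AEMeasurable (F k) μ) (z : ℂ) :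
    ∑' k, cauchyMajorant μ (F k) z = cauchyMajorant μ (fun w => ∑' k, F k w) z := by
  simp only [cauchyMajorant, ← ENNReal.tsum_mul_left]
  exact (lintegral_tsum fun k =>
    (measurable_id.sub_const z).inv.enorm.aemeasurable.mul (hF k)).symm

lemma ae_tendsto_cauchyIntegral [SFinite μ] {φ : ℕ → ℂ → ℂ} (hf : Integrable f μ)
    (hφ : ∀ k, Integrable (φ k) μ) (hsum : ∑' k, ∫⁻ w, ‖f w - φ k w‖ₑ ∂μ ≠ ⊤) :
    ∀ᵐ z, Tendsto (fun k => cauchyIntegral μ (φ k) z) atTop (𝓝 (cauchyIntegral μ f z)) := by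
  have hmeas (k : ℕ) : AEMeasurable (fun w => ‖f w - φ k w‖ₑ) μ := (hf.1.sub (hφ k).1).enorm
  filter_upwards [ae_cauchyMajorant_lt_top (AEMeasurable.tsum hmeas)
      (by rwa [lintegral_tsum hmeas]), ae_cauchyMajorant_lt_top hf.1.enorm hf.2.ne,
    ae_all_iff.2 fun k => ae_cauchyMajorant_lt_top (hφ k).1.enorm (hφ k).2.ne]
    with z hz hfz hφz
  have hsmall : Tendsto (fun k => cauchyMajorant μ (fun w => ‖f w - φ k w‖ₑ) z) atTop (𝓝 0) :=
    ENNReal.tendsto_atTop_zero_of_tsum_ne_top (by rw [tsum_cauchyMajorant hmeas]; exact hz.ne)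
  rw [tendsto_iff_edist_tendsto_0]
  refine tendsto_of_tendsto_of_tendsto_of_le_of_le tendsto_const_nhds hsmall (fun _ => zero_le)
    fun k => ?_
  rw [edist_comm]
  exact edist_cauchyIntegral_le hf.1 (hφ k).1 hfz.ne (hφz k).ne

end CauchyIntegral

lemma volume_graphC {A : ℝ → ℝ} (hA : Measurable A) : volume (graphC A) = 0 := by
  have hS : MeasurableSet {p : ℝ × ℝ | p.2 = A p.1} :=
    measurableSet_eq_fun measurable_snd (hA.comp measurable_fst)
  have hgraph : graphC A = measurableEquivRealProd ⁻¹' {p : ℝ × ℝ | p.2 = A p.1} := by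
    ext z
    constructor
    · rintro ⟨x, rfl⟩
      simp [measurableEquivRealProd]
    · intro hz
      exact ⟨z.re, Complex.ext (by simp) (by simpa [measurableEquivRealProd] using hz.symm)⟩
  rw [hgraph, volume_preserving_equiv_real_prod.measure_preimage hS.nullMeasurableSet,
    Measure.volume_eq_prod, Measure.measure_prod_null hS]
  exact Eventually.of_forall fun x => by simp [preimage]

lemma volume_image_mul_add_eq_zero {s : Set ℂ} (hs : volume s = 0) (c b : ℂ) :
    volume ((fun z => c * z + b) '' s) = 0 := by
  have : (fun z => c * z + b) '' s = (· + b) '' (LinearMap.mulLeft ℝ c '' s) := by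
    rw [image_image]
    rfl
  rw [this, image_add_right, measure_preimage_add_right, Measure.addHaar_image_linearMap, hs,
    mul_zero]

lemma RotLipGraph.volume_carrier (Γ : RotLipGraph) : volume Γ.carrier = 0 := by
  have : Γ.carrier =
      (fun z => exp (Γ.β * I) * z + (Γ.z₀ - exp (Γ.β * I) * Γ.z₀)) '' graphC Γ.A := by
    unfold RotLipGraph.carrier
    congr 1
    funext z
    ring
  rw [this]
  exact volume_image_mul_add_eq_zero (volume_graphC Γ.lip.continuous.measurable) _ _

lemma Fset_subset_F0_union (μ : Measure ℂ) (g : ℕ → ℂ → ℂ) (Γ : ℕ → RotLipGraph) (h : ℂ → ℝ) :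
    Fset μ g Γ h ⊆ F0 μ g ∪ ⋃ n, (Γ n).carrier := by
  rintro z ((hz | ⟨hz, -⟩) | ⟨hz, -⟩)
  · exact Or.inl hz
  all_goals
    obtain ⟨n, hn, -⟩ := mem_iUnion.1 hz
    exact Or.inr (mem_iUnion.2 ⟨n, hn⟩)

lemma exists_tsum_lintegral_enorm_sub_ne_top {α E : Type*} [MeasurableSpace α]
    [NormedAddCommGroup E] {μ : Measure α} [IsFiniteMeasure μ] {s : ℝ≥0∞} (hs : 1 ≤ s)
    {f : α → E} {g : ℕ → α → E}
    (hf : AEStronglyMeasurable f μ) (hg : ∀ j, AEStronglyMeasurable (g j) μ)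
    (hdense : ∀ ε : ℝ, 0 < ε → ∃ j, eLpNorm (f - g j) s μ < ENNReal.ofReal ε) :
    ∃ j : ℕ → ℕ, ∑' k, ∫⁻ x, ‖f x - g (j k) x‖ₑ ∂μ ≠ ⊤ := by
  obtain ⟨ε, hε, hεsum⟩ := ENNReal.exists_pos_sum_of_countable one_ne_zero ℕ
  choose j hj using fun k => hdense (ε k) (hε k)
  set C := μ univ ^ (1 - 1 / s.toReal)
  have hC : C ≠ ⊤ := by
    refine ENNReal.rpow_ne_top_of_nonneg (sub_nonneg.2 ?_) (measure_ne_top μ univ)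
    rcases eq_or_ne s ⊤ with rfl | hs_top
    · simp
    · exact div_le_one_of_le₀ (by simpa using ENNReal.toReal_mono hs_top hs) ENNReal.toReal_nonneg
  refine ⟨j, ne_top_of_le_ne_top (ENNReal.mul_ne_top (hεsum.trans ENNReal.one_lt_top).ne hC) ?_⟩
  calc ∑' k, ∫⁻ x, ‖f x - g (j k) x‖ₑ ∂μ = ∑' k, eLpNorm (f - g (j k)) 1 μ := by
        simp [eLpNorm_one_eq_lintegral_enorm]
    _ ≤ ∑' k, eLpNorm (f - g (j k)) s μ * C := ENNReal.tsum_le_tsum fun k => by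
        simpa [C] using eLpNorm_le_eLpNorm_mul_rpow_measure_univ hs (hf.sub (hg (j k)))
    _ ≤ ∑' k, (ε k : ℝ≥0∞) * C := ENNReal.tsum_le_tsum fun k =>
        mul_le_mul_left ((hj k).le.trans_eq ENNReal.ofReal_coe_nnreal) C
    _ = (∑' k, (ε k : ℝ≥0∞)) * C := ENNReal.tsum_mul_right

theorem stmt11_general (K : Set ℂ) (μ : Measure ℂ) [IsFiniteMeasure μ]
    (t s : ℝ≥0∞) (hts : 1 / t + 1 / s = 1)
    (g : ℕ → ℂ → ℂ) (hΛ : DenseInPerp K μ s g)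
    (Γ : ℕ → RotLipGraph) (h : ℂ → ℝ)
    (gp : ℂ → ℂ) (hgp : MemPerp K μ s gp) :
    ∀ᵐ z ∂((volume : Measure ℂ).restrict (Fset μ g Γ h)), cauchyPV μ gp z = 0 := by
  have hs : 1 ≤ s := by
    simpa [ENNReal.inv_le_one] using (le_add_self : 1 / s ≤ 1 / t + 1 / s).trans_eq hts
  have hgp_int : Integrable gp μ := hgp.1.integrable hs
  have hg_int (i : ℕ) : Integrable (g i) μ := (hΛ.1 i).1.integrable hs
  obtain ⟨j, hj⟩ := exists_tsum_lintegral_enorm_sub_ne_top hs hgp_int.1 (fun i => (hg_int i).1)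
    (hΛ.2 gp hgp)
  -- `Fset` need not be measurable, so a.e. on `Fset` is reached through the measurable set `Z`.
  set Z := ⋂ k, cauchyIntegral μ (g (j k)) ⁻¹' {0}
  have hZ : MeasurableSet Z := MeasurableSet.iInter fun k =>
    (stronglyMeasurable_cauchyIntegral (hg_int (j k)).1).measurable (measurableSet_singleton 0)
  have hFZ : ∀ᵐ z, z ∈ Fset μ g Γ h → z ∈ Z := by
    filter_upwards [ae_all_iff.2 fun k => ae_cauchyPV_eq_cauchyIntegral (hg_int (j k)),
      measure_eq_zero_iff_ae_notMem.1 (measure_iUnion_null fun n => (Γ n).volume_carrier)]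
      with z hPV hΓ hz
    rcases Fset_subset_F0_union μ g Γ h hz with hz0 | hzΓ
    · exact mem_iInter.2 fun k => (hPV k).symm.trans (hz0.2 (j k))
    · exact absurd hzΓ hΓ
  have hZ0 : ∀ᵐ z, z ∈ Z → cauchyPV μ gp z = 0 := by
    filter_upwards [ae_cauchyPV_eq_cauchyIntegral hgp_int,
      ae_tendsto_cauchyIntegral hgp_int (fun k => hg_int (j k)) hj] with z hPV hlim hz
    have hzero (k : ℕ) : cauchyIntegral μ (g (j k)) z = 0 := mem_iInter.1 hz k
    rw [hPV]
    exact tendsto_nhds_unique hlim (by simp only [hzero, tendsto_const_nhds])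
  exact ((ae_restrict_iff hZ).2 hFZ).mp (ae_restrict_of_ae hZ0)

/-- For `g ∈ R^t(K,μ)^⊥`, the Cauchy transform `C(gμ)` vanishes area-a.e.
on the non-removable boundary `𝓕`. -/
theorem stmt11 (K : Set ℂ) (hK : IsCompact K) (μ : Measure ℂ) [IsFiniteMeasure μ]
    (hμK : μ Kᶜ = 0) (t s : ℝ≥0∞) (ht1 : 1 ≤ t) (ht2 : t ≠ ⊤) (hts : 1 / t + 1 / s = 1)
    (g : ℕ → ℂ → ℂ) (hΛ : DenseInPerp K μ s g)
    (Γ : ℕ → RotLipGraph) (h : ℂ → ℝ) (μs : Measure ℂ) (hdec : GoodDecomp μ Γ h μs)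
    (gp : ℂ → ℂ) (hgp : MemPerp K μ s gp) :
    ∀ᵐ z ∂((volume : Measure ℂ).restrict (Fset μ g Γ h)), cauchyPV μ gp z = 0 :=
  stmt11_general K μ t s hts g hΛ Γ h gp hgp
end
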